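/- Let 1 < p < 3 and let α : ℝ → ℝ be continuous with lim_{t→-∞} α(t) = 1/(3-p) and α(t) - 1/(3-p) = O(e^{t/2}) as t → -∞. Then there exists a unique solution μ of the Riccati equation μ' = ((5-p)/(p-1))α² - [((5-p)/(p-1))α + 1/(p-1)]μ + ((3-p)/(p-1))μ², defined on a maximal interval (-∞, T), with lim_{t→-∞} μ(t) = 1/(3-p); moreover this solution satisfies μ(t) = 1/(3-p) + O(e^{t/2}) as t → -∞. -/

import Mathlib

/-!
Writing `μ = 1/(3-p) + ν` turns the equation into `ν' = a + b ν + c ν²` with `a = O(e^{t/2})`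
and `b → -2/((p-1)(3-p)) < 0` at `-∞`. On a half-line `(-∞, T₀]` on which `b ≤ -κ < 0` and `a`
is small, the ancient solution is the fixed point of `ν ↦ e^B ∫_{-∞}^t e^{-B} (a + c ν²)`
(`B' = b`), a contraction of the bounded continuous functions with `|ν t| ≤ K e^{t/2}`.

The difference `w` of two ancient solutions solves the linear equation `w' = g w` with `g`
negative near `-∞`, so `w e^{-∫ g}` is constant and bounded by `|w s| → 0` as `s → -∞`.
-/

open Real Filter Asymptotics

/-- Right-hand side of the Riccati equation for the structural coefficient `μ`. -/
noncomputable def riccatiRHS (p : ℝ) (α : ℝ → ℝ) (t m : ℝ) : ℝ :=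
  (5 - p) / (p - 1) * (α t) ^ 2
    - ((5 - p) / (p - 1) * α t + 1 / (p - 1)) * m
    + (3 - p) / (p - 1) * m ^ 2

open MeasureTheory Set Topology

section IicIntegral

variable {g : ℝ → ℝ} {t T : ℝ}

theorem setIntegral_Iic_eq_sub (hg : IntegrableOn g (Iic T)) (ht : t ≤ T) :
    ∫ s in Iic t, g s = (∫ s in Iic T, g s) - ∫ s in t..T, g s := by
  rw [← intervalIntegral.integral_Iic_sub_Iic (hg.mono_set (Iic_subset_Iic.2 ht)) hg]
  ring

theorem continuousOn_setIntegral_Iic (hg : Continuous g) (hint : IntegrableOn g (Iic T)) :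
    ContinuousOn (fun u => ∫ s in Iic u, g s) (Iic T) := by
  have hprim : Continuous fun u => ∫ s in u..T, g s := by
    rw [show (fun u => ∫ s in u..T, g s) = fun u => -∫ s in T..u, g s from
      funext fun u => intervalIntegral.integral_symm _ _]
    exact (intervalIntegral.continuous_primitive (fun _ _ => hg.intervalIntegrable _ _) T).neg
  exact (continuous_const.sub hprim).continuousOn.congr fun u hu => setIntegral_Iic_eq_sub hint hu

theorem hasDerivAt_setIntegral_Iic (hg : Continuous g) (hint : IntegrableOn g (Iic T))
    (ht : t < T) : HasDerivAt (fun u => ∫ s in Iic u, g s) (g t) t := by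
  have hderiv : HasDerivAt (fun u => (∫ s in Iic T, g s) - ∫ s in u..T, g s) (g t) t := by
    simpa using (intervalIntegral.integral_hasDerivAt_left (hg.intervalIntegrable _ _)
      (hg.stronglyMeasurableAtFilter _ _) hg.continuousAt).const_sub (∫ s in Iic T, g s)
  refine hderiv.congr_of_eventuallyEq ?_
  filter_upwards [Iio_mem_nhds ht] with u hu using setIntegral_Iic_eq_sub hint (le_of_lt hu)

end IicIntegral

/-- With `B' = b`, this is the solution of `y' = b y + f` that vanishes at `-∞`. -/
noncomputable def ancientDuhamel (B f : ℝ → ℝ) (t : ℝ) : ℝ :=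
  exp (B t) * ∫ s in Iic t, exp (-B s) * f s

section AncientDuhamel

variable {B b f : ℝ → ℝ} {κ γ D T τ : ℝ}

theorem continuousOn_ancientDuhamel (hB : Continuous B) (hf : Continuous f)
    (hint : IntegrableOn (fun s => exp (-B s) * f s) (Iic T)) :
    ContinuousOn (ancientDuhamel B f) (Iic T) :=
  hB.rexp.continuousOn.mul (continuousOn_setIntegral_Iic (hB.neg.rexp.mul hf) hint)

theorem hasDerivAt_ancientDuhamel (hB : ∀ t, HasDerivAt B (b t) t) (hf : Continuous f)
    (hint : IntegrableOn (fun s => exp (-B s) * f s) (Iic T)) {t : ℝ} (ht : t < T) :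
    HasDerivAt (ancientDuhamel B f) (b t * ancientDuhamel B f t + f t) t := by
  have hBc : Continuous B := continuous_iff_continuousAt.2 fun t => (hB t).continuousAt
  have hg : Continuous fun s => exp (-B s) * f s := (hBc.neg.rexp).mul hf
  refine (((hB t).exp).mul (hasDerivAt_setIntegral_Iic hg hint ht)).congr_deriv ?_
  rw [← mul_assoc, ← exp_add, add_neg_cancel, exp_zero, one_mul, ancientDuhamel]
  ring

theorem norm_exp_neg_mul_le (hBκ : AntitoneOn (fun t => B t + κ * t) (Iic τ))
    (hfD : ∀ s ≤ τ, |f s| ≤ D * exp (γ * s)) {s : ℝ} (hs : s ≤ τ) :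
    ‖exp (-B s) * f s‖ ≤ D * exp (-B τ - κ * τ) * exp ((κ + γ) * s) := by
  have hBs : -B s ≤ -B τ - κ * τ + κ * s := by
    have := hBκ hs (mem_Iic.2 le_rfl) hs
    linarith
  calc ‖exp (-B s) * f s‖ = exp (-B s) * |f s| := by
        rw [norm_mul, norm_of_nonneg (exp_pos _).le, norm_eq_abs]
    _ ≤ exp (-B τ - κ * τ + κ * s) * (D * exp (γ * s)) := by gcongr; exact hfD s hs
    _ = D * exp (-B τ - κ * τ) * exp ((κ + γ) * s) := by
        rw [add_mul, exp_add, exp_add]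
        ring

theorem ancientDuhamel_sub {f₁ f₂ : ℝ → ℝ}
    (h₁ : IntegrableOn (fun s => exp (-B s) * f₁ s) (Iic τ))
    (h₂ : IntegrableOn (fun s => exp (-B s) * f₂ s) (Iic τ)) :
    ancientDuhamel B f₁ τ - ancientDuhamel B f₂ τ = ancientDuhamel B (fun s => f₁ s - f₂ s) τ := by
  rw [ancientDuhamel, ancientDuhamel, ancientDuhamel, ← mul_sub, ← integral_sub h₁ h₂]
  simp only [mul_sub]

theorem integrableOn_exp_neg_mul (hκγ : 0 < κ + γ) (hB : Continuous B)
    (hBκ : AntitoneOn (fun t => B t + κ * t) (Iic τ)) (hf : Continuous f)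
    (hfD : ∀ s ≤ τ, |f s| ≤ D * exp (γ * s)) :
    IntegrableOn (fun s => exp (-B s) * f s) (Iic τ) :=
  ((integrableOn_exp_mul_Iic hκγ τ).const_mul _).mono'
    (hB.neg.rexp.mul hf).aestronglyMeasurable
    ((ae_restrict_iff' measurableSet_Iic).2 (ae_of_all _ fun _ hs =>
      norm_exp_neg_mul_le hBκ hfD hs))

theorem abs_ancientDuhamel_le (hκγ : 0 < κ + γ)
    (hBκ : AntitoneOn (fun t => B t + κ * t) (Iic τ)) (hfD : ∀ s ≤ τ, |f s| ≤ D * exp (γ * s)) :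
    |ancientDuhamel B f τ| ≤ D / (κ + γ) * exp (γ * τ) := by
  have hint := (integrableOn_exp_mul_Iic hκγ τ).const_mul (D * exp (-B τ - κ * τ))
  have hnorm := norm_integral_le_of_norm_le hint
    ((ae_restrict_iff' measurableSet_Iic).2 (ae_of_all _ fun _ hs =>
      norm_exp_neg_mul_le hBκ hfD hs))
  rw [integral_const_mul, integral_exp_mul_Iic hκγ] at hnorm
  calc |ancientDuhamel B f τ| = exp (B τ) * ‖∫ s in Iic τ, exp (-B s) * f s‖ := by
        rw [ancientDuhamel, abs_mul, abs_of_pos (exp_pos _), norm_eq_abs]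
    _ ≤ exp (B τ) * (D * exp (-B τ - κ * τ) * (exp ((κ + γ) * τ) / (κ + γ))) := by gcongr
    _ = D / (κ + γ) * exp (B τ + (-B τ - κ * τ) + (κ + γ) * τ) := by
        rw [exp_add, exp_add]; ring
    _ = D / (κ + γ) * exp (γ * τ) := by ring_nf

end AncientDuhamel

/-- Fixed points solve `ν' = a + b ν + c ν²` on `(-∞, T₀)` when `B' = b`; freezing the time at
`T₀` keeps the image of a bounded function bounded. -/
noncomputable def riccatiMap (a B : ℝ → ℝ) (c T₀ : ℝ) (ν : ℝ → ℝ) (t : ℝ) : ℝ :=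
  ancientDuhamel B (fun s => a s + c * ν s ^ 2) (min t T₀)

section RiccatiMap

variable {a B ν ν₁ ν₂ : ℝ → ℝ} {c κ γ C K T₀ : ℝ}

theorem abs_add_mul_sq_le (hγ : 0 ≤ γ) (haC : ∀ s ≤ T₀, |a s| ≤ C * exp (γ * s))
    (hK : C + κ / 4 * K ≤ κ * K) (hsmall : |c| * K * exp (γ * T₀) ≤ κ / 4)
    (hν : ∀ s ≤ T₀, |ν s| ≤ K * exp (γ * s)) {s : ℝ} (hs : s ≤ T₀) :
    |a s + c * ν s ^ 2| ≤ κ * K * exp (γ * s) := by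
  have hKs : 0 ≤ K * exp (γ * s) := (abs_nonneg _).trans (hν s hs)
  have hK0 : 0 ≤ K := (mul_nonneg_iff_of_pos_right (exp_pos _)).1 hKs
  have hsq : |c| * ν s ^ 2 ≤ κ / 4 * (K * exp (γ * s)) := by
    calc |c| * ν s ^ 2 ≤ |c| * (K * exp (γ * s)) ^ 2 := by
          rw [← sq_abs]; gcongr; exact hν s hs
      _ ≤ |c| * (K * exp (γ * T₀)) * (K * exp (γ * s)) := by
          rw [sq, ← mul_assoc]; gcongr
      _ ≤ κ / 4 * (K * exp (γ * s)) := by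
          rw [← mul_assoc |c|]; exact mul_le_mul_of_nonneg_right hsmall hKs
  calc |a s + c * ν s ^ 2| ≤ |a s| + |c * ν s ^ 2| := abs_add_le _ _
    _ = |a s| + |c| * ν s ^ 2 := by rw [abs_mul, abs_sq]
    _ ≤ (C + κ / 4 * K) * exp (γ * s) := by linarith [haC s hs]
    _ ≤ κ * K * exp (γ * s) := by gcongr

theorem integrableOn_riccatiIntegrand (hκ : 0 < κ) (hγ : 0 ≤ γ) (hB : Continuous B)
    (hBκ : AntitoneOn (fun t => B t + κ * t) (Iic T₀)) (ha : Continuous a)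
    (haC : ∀ s ≤ T₀, |a s| ≤ C * exp (γ * s)) (hK : C + κ / 4 * K ≤ κ * K)
    (hsmall : |c| * K * exp (γ * T₀) ≤ κ / 4) (hνc : Continuous ν)
    (hν : ∀ s ≤ T₀, |ν s| ≤ K * exp (γ * s)) :
    IntegrableOn (fun s => exp (-B s) * (a s + c * ν s ^ 2)) (Iic T₀) :=
  integrableOn_exp_neg_mul (by linarith) hB hBκ (by fun_prop)
    fun _ hs => abs_add_mul_sq_le hγ haC hK hsmall hν hs

theorem continuous_riccatiMap (hκ : 0 < κ) (hγ : 0 ≤ γ) (hB : Continuous B)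
    (hBκ : AntitoneOn (fun t => B t + κ * t) (Iic T₀)) (ha : Continuous a)
    (haC : ∀ s ≤ T₀, |a s| ≤ C * exp (γ * s)) (hK : C + κ / 4 * K ≤ κ * K)
    (hsmall : |c| * K * exp (γ * T₀) ≤ κ / 4) (hνc : Continuous ν)
    (hν : ∀ s ≤ T₀, |ν s| ≤ K * exp (γ * s)) :
    Continuous (riccatiMap a B c T₀ ν) :=
  (continuousOn_ancientDuhamel hB (by fun_prop) (integrableOn_riccatiIntegrand hκ hγ hB hBκ ha
    haC hK hsmall hνc hν)).comp_continuous (continuous_id.min continuous_const)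
    fun t => min_le_right t T₀

theorem abs_riccatiMap_le (hκ : 0 < κ) (hγ : 0 ≤ γ)
    (hBκ : AntitoneOn (fun t => B t + κ * t) (Iic T₀))
    (haC : ∀ s ≤ T₀, |a s| ≤ C * exp (γ * s)) (hK : C + κ / 4 * K ≤ κ * K)
    (hsmall : |c| * K * exp (γ * T₀) ≤ κ / 4)
    (hν : ∀ s ≤ T₀, |ν s| ≤ K * exp (γ * s)) (t : ℝ) :
    |riccatiMap a B c T₀ ν t| ≤ K * exp (γ * min t T₀) := by
  have hK0 : 0 ≤ K :=
    (mul_nonneg_iff_of_pos_right (exp_pos _)).1 ((abs_nonneg _).trans (hν T₀ le_rfl))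
  refine (abs_ancientDuhamel_le (by linarith) (hBκ.mono (Iic_subset_Iic.2 (min_le_right _ _)))
    fun s hs => abs_add_mul_sq_le hγ haC hK hsmall hν (hs.trans (min_le_right _ _))).trans ?_
  gcongr
  rw [div_le_iff₀ (by linarith), mul_comm]
  exact mul_le_mul_of_nonneg_left (by linarith) hK0

theorem abs_riccatiMap_sub_le (hκ : 0 < κ) (hγ : 0 ≤ γ) (hB : Continuous B)
    (hBκ : AntitoneOn (fun t => B t + κ * t) (Iic T₀)) (ha : Continuous a)
    (haC : ∀ s ≤ T₀, |a s| ≤ C * exp (γ * s)) (hK : C + κ / 4 * K ≤ κ * K)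
    (hsmall : |c| * K * exp (γ * T₀) ≤ κ / 4)
    (hν₁c : Continuous ν₁) (hν₁ : ∀ s ≤ T₀, |ν₁ s| ≤ K * exp (γ * s))
    (hν₂c : Continuous ν₂) (hν₂ : ∀ s ≤ T₀, |ν₂ s| ≤ K * exp (γ * s))
    {d : ℝ} (hd : ∀ s, |ν₁ s - ν₂ s| ≤ d) (t : ℝ) :
    |riccatiMap a B c T₀ ν₁ t - riccatiMap a B c T₀ ν₂ t| ≤ d / 2 := by
  have hτ : min t T₀ ≤ T₀ := min_le_right t T₀
  have hd0 : 0 ≤ d := (abs_nonneg _).trans (hd t)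
  have hK0 : 0 ≤ K :=
    (mul_nonneg_iff_of_pos_right (exp_pos _)).1 ((abs_nonneg _).trans (hν₁ T₀ le_rfl))
  have hdiff : ∀ s ≤ min t T₀, |(a s + c * ν₁ s ^ 2) - (a s + c * ν₂ s ^ 2)| ≤
      2 * |c| * K * d * exp (γ * s) := by
    intro s hs
    have hsum : |ν₁ s + ν₂ s| ≤ 2 * (K * exp (γ * s)) := by
      linarith [abs_add_le (ν₁ s) (ν₂ s), hν₁ s (hs.trans hτ), hν₂ s (hs.trans hτ)]
    calc |(a s + c * ν₁ s ^ 2) - (a s + c * ν₂ s ^ 2)| = |c| * (|ν₁ s - ν₂ s| * |ν₁ s + ν₂ s|) := by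
          rw [← abs_mul, ← abs_mul]; ring_nf
      _ ≤ |c| * (d * (2 * (K * exp (γ * s)))) := by gcongr; exact hd s
      _ = 2 * |c| * K * d * exp (γ * s) := by ring
  rw [riccatiMap, riccatiMap, ancientDuhamel_sub
    ((integrableOn_riccatiIntegrand hκ hγ hB hBκ ha haC hK hsmall hν₁c hν₁).mono_set
      (Iic_subset_Iic.2 hτ))
    ((integrableOn_riccatiIntegrand hκ hγ hB hBκ ha haC hK hsmall hν₂c hν₂).mono_set
      (Iic_subset_Iic.2 hτ))]
  calc _ ≤ 2 * |c| * K * d / (κ + γ) * exp (γ * min t T₀) :=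
        abs_ancientDuhamel_le (by linarith) (hBκ.mono (Iic_subset_Iic.2 hτ)) hdiff
    _ ≤ 2 * |c| * K * d / κ * exp (γ * T₀) := by gcongr; linarith
    _ = 2 * d / κ * (|c| * K * exp (γ * T₀)) := by ring
    _ ≤ 2 * d / κ * (κ / 4) := by gcongr
    _ = d / 2 := by field_simp; ring

theorem exists_fixedPoint_riccatiMap (hκ : 0 < κ) (hγ : 0 ≤ γ) (hB : Continuous B)
    (hBκ : AntitoneOn (fun t => B t + κ * t) (Iic T₀)) (ha : Continuous a)
    (haC : ∀ s ≤ T₀, |a s| ≤ C * exp (γ * s)) (hK : C + κ / 4 * K ≤ κ * K)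
    (hsmall : |c| * K * exp (γ * T₀) ≤ κ / 4) :
    ∃ ν : ℝ → ℝ, Continuous ν ∧ (∀ s ≤ T₀, |ν s| ≤ K * exp (γ * s)) ∧
      riccatiMap a B c T₀ ν = ν := by
  have hK0 : 0 ≤ K := by
    have hC0 : 0 ≤ C * exp (γ * T₀) := (abs_nonneg _).trans (haC T₀ le_rfl)
    have := (mul_nonneg_iff_of_pos_right (exp_pos _)).1 hC0
    nlinarith
  let Ω : Set (BoundedContinuousFunction ℝ ℝ) := {ν | ∀ t, |ν t| ≤ K * exp (γ * min t T₀)}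
  have hΩ : IsClosed Ω := by
    simp only [Ω, ofPred_forall]
    exact isClosed_iInter fun t => isClosed_le (continuous_eval_const t).abs continuous_const
  have hdecay : ∀ ν ∈ Ω, ∀ s ≤ T₀, |ν s| ≤ K * exp (γ * s) := fun ν hν s hs => by
    simpa only [min_eq_left hs] using hν s
  let Φ : Ω → Ω := fun ν =>
    ⟨.ofNormedAddCommGroup (riccatiMap a B c T₀ ν)
      (continuous_riccatiMap hκ hγ hB hBκ ha haC hK hsmall ν.1.continuous (hdecay _ ν.2))
      (K * exp (γ * T₀)) fun t =>
        (abs_riccatiMap_le hκ hγ hBκ haC hK hsmall (hdecay _ ν.2) t).trans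
          (by gcongr; exact min_le_right t T₀),
      abs_riccatiMap_le hκ hγ hBκ haC hK hsmall (hdecay _ ν.2)⟩
  have : CompleteSpace Ω := hΩ.completeSpace_coe
  have : Nonempty Ω := ⟨⟨0, fun t => by
    rw [show (0 : BoundedContinuousFunction ℝ ℝ) t = 0 from rfl, abs_zero]; positivity⟩⟩
  have hΦ : ContractingWith (1 / 2) Φ := by
    refine ⟨by rw [one_div, NNReal.inv_lt_one_iff two_ne_zero]; norm_num, ?_⟩
    refine LipschitzWith.of_dist_le_mul fun ν₁ ν₂ => ?_
    rw [Subtype.dist_eq, Subtype.dist_eq, BoundedContinuousFunction.dist_le (by positivity)]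
    intro t
    simpa [Φ, Real.dist_eq, div_eq_inv_mul] using abs_riccatiMap_sub_le hκ hγ hB hBκ ha haC hK
      hsmall ν₁.1.continuous (hdecay _ ν₁.2) ν₂.1.continuous (hdecay _ ν₂.2)
      (d := dist ν₁.1 ν₂.1) (fun s => by
        simpa only [Real.dist_eq] using ν₁.1.dist_coe_le_dist (g := ν₂.1) s) t
  obtain ⟨ν, hν⟩ : ∃ ν, Φ ν = ν := ⟨_, hΦ.fixedPoint_isFixedPt⟩
  refine ⟨ν.1, ν.1.continuous, hdecay _ ν.2, funext fun t => ?_⟩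
  simpa [Φ] using congrArg (fun μ : Ω => μ.1 t) hν

end RiccatiMap

theorem exists_riccati_solution_of_small {a b : ℝ → ℝ} {c κ γ C K T₀ : ℝ} (hκ : 0 < κ)
    (hγ : 0 ≤ γ) (ha : Continuous a) (hb : Continuous b) (hbκ : ∀ t ≤ T₀, b t ≤ -κ)
    (haC : ∀ s ≤ T₀, |a s| ≤ C * exp (γ * s)) (hK : C + κ / 4 * K ≤ κ * K)
    (hsmall : |c| * K * exp (γ * T₀) ≤ κ / 4) :
    ∃ ν : ℝ → ℝ, (∀ t < T₀, HasDerivAt ν (a t + b t * ν t + c * ν t ^ 2) t) ∧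
      ∀ t ≤ T₀, |ν t| ≤ K * exp (γ * t) := by
  set B : ℝ → ℝ := fun t => ∫ s in T₀..t, b s
  have hB : ∀ t, HasDerivAt B (b t) t := fun t => (hb.integral_hasStrictDerivAt T₀ t).hasDerivAt
  have hBc : Continuous B := continuous_iff_continuousAt.2 fun t => (hB t).continuousAt
  have hBκ : AntitoneOn (fun t => B t + κ * t) (Iic T₀) := by
    refine antitoneOn_of_hasDerivWithinAt_nonpos (convex_Iic T₀) (by fun_prop)
      (fun t _ => (((hB t).add ((hasDerivAt_id t).const_mul κ))).hasDerivWithinAt) ?_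
    intro t ht
    rw [interior_Iic] at ht
    linarith [hbκ t (le_of_lt ht)]
  obtain ⟨ν, hνc, hνK, hfix⟩ := exists_fixedPoint_riccatiMap hκ hγ hBc hBκ ha haC hK hsmall
  have hνt : ∀ u < T₀, ν u = ancientDuhamel B (fun s => a s + c * ν s ^ 2) u := fun u hu =>
    (congrFun hfix u).symm.trans (by rw [riccatiMap, min_eq_left hu.le])
  refine ⟨ν, fun t ht => ?_, hνK⟩
  have hderiv := (hasDerivAt_ancientDuhamel hB (by fun_prop)
    (integrableOn_riccatiIntegrand hκ hγ hBc hBκ ha haC hK hsmall hνc hνK) ht).congr_of_eventuallyEq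
    (eventually_of_mem (Iio_mem_nhds ht) hνt)
  rw [← hνt t ht] at hderiv
  exact hderiv.congr_deriv (by ring)

theorem exists_riccati_solution_isBigO {a b : ℝ → ℝ} {c κ γ : ℝ} (hκ : 0 < κ) (hγ : 0 < γ)
    (ha : Continuous a) (hb : Continuous b) (hbκ : ∀ᶠ t in atBot, b t ≤ -κ)
    (haO : a =O[atBot] fun t => exp (γ * t)) :
    ∃ T : ℝ, ∃ ν : ℝ → ℝ, (∀ t < T, HasDerivAt ν (a t + b t * ν t + c * ν t ^ 2) t) ∧
      ν =O[atBot] fun t => exp (γ * t) := by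
  obtain ⟨C, hC, haC⟩ := haO.exists_pos
  set K := 2 * C / κ
  have hK : C + κ / 4 * K ≤ κ * K := by
    simp only [K]; field_simp; linarith
  have hexp : Tendsto (fun t => |c| * K * exp (γ * t)) atBot (𝓝 0) := by
    simpa using (tendsto_exp_atBot.comp (tendsto_id.const_mul_atBot hγ)).const_mul (|c| * K)
  obtain ⟨T₀, hT₀⟩ := eventually_atBot.1 (hbκ.and (haC.bound.and
    (hexp.eventually (eventually_le_nhds (by linarith : (0 : ℝ) < κ / 4)))))
  obtain ⟨ν, hν, hνK⟩ := exists_riccati_solution_of_small hκ hγ.le ha hb (fun t ht => (hT₀ t ht).1)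
    (fun t ht => by simpa [abs_of_pos (exp_pos _)] using (hT₀ t ht).2.1) hK (hT₀ T₀ le_rfl).2.2
  refine ⟨T₀, ν, hν, IsBigO.of_bound K (eventually_atBot.2 ⟨T₀, fun t ht => ?_⟩)⟩
  simpa [abs_of_pos (exp_pos _)] using hνK t ht

theorem eq_zero_of_hasDerivAt_mul {w g : ℝ → ℝ} {T : ℝ}
    (hw : ∀ t < T, HasDerivAt w (g t * w t) t) (hg : ContinuousOn g (Iio T))
    (hg0 : ∀ᶠ t in atBot, g t ≤ 0) (hw0 : Tendsto w atBot (𝓝 0)) {t : ℝ} (ht : t < T) :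
    w t = 0 := by
  obtain ⟨t₀, ht₀⟩ := eventually_atBot.1 (hg0.and (eventually_lt_atBot T))
  have ht₀T : t₀ < T := (ht₀ t₀ le_rfl).2
  set G : ℝ → ℝ := fun u => ∫ s in u..t₀, g s
  have hG : ∀ u < T, HasDerivAt G (-g u) u := fun u hu =>
    intervalIntegral.integral_hasDerivAt_left
      ((hg.mono fun x hx => hx.2.trans_lt (max_lt hu ht₀T)).intervalIntegrable)
      (hg.stronglyMeasurableAtFilter isOpen_Iio u hu) (hg.continuousAt (Iio_mem_nhds hu))
  have hconst : ∀ u < T, HasDerivAt (fun s => w s * exp (G s)) 0 u := fun u hu =>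
    ((hw u hu).mul (hG u hu).exp).congr_deriv (by ring)
  have hGneg : ∀ s ≤ t₀, G s ≤ 0 := fun s hs => by
    have := intervalIntegral.integral_nonneg (f := fun u => -g u) (μ := volume) hs
      fun u hu => neg_nonneg.2 (ht₀ u hu.2).1
    rw [intervalIntegral.integral_neg] at this
    linarith
  have hle : ∀ s ≤ t₀, |w t * exp (G t)| ≤ |w s| := fun s hs => by
    rw [isOpen_Iio.is_const_of_deriv_eq_zero isPreconnected_Iio
      (fun u hu => (hconst u hu).differentiableAt.differentiableWithinAt)
      (fun u hu => (hconst u hu).deriv) (mem_Iio.2 ht) (mem_Iio.2 (hs.trans_lt ht₀T)),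
      abs_mul, abs_of_pos (exp_pos _)]
    exact mul_le_of_le_one_right (abs_nonneg _) (exp_le_one_iff.2 (hGneg s hs))
  have hzero : |w t * exp (G t)| ≤ 0 :=
    ge_of_tendsto (by simpa using hw0.abs) (eventually_atBot.2 ⟨t₀, hle⟩)
  rw [abs_nonpos_iff, mul_eq_zero] at hzero
  exact hzero.resolve_right (exp_pos _).ne'

section Riccati

variable {p : ℝ} {α : ℝ → ℝ}

theorem riccatiRHS_add (hp : p ≠ 3) (t m : ℝ) :
    riccatiRHS p α t (1 / (3 - p) + m) =
      (5 - p) / (p - 1) * (α t - 1 / (3 - p)) * α t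
        + (1 / (p - 1) - (5 - p) / (p - 1) * α t) * m + (3 - p) / (p - 1) * m ^ 2 := by
  have : (3 : ℝ) - p ≠ 0 := sub_ne_zero.2 hp.symm
  simp only [riccatiRHS]
  field_simp
  ring

theorem riccatiRHS_sub (t m₁ m₂ : ℝ) :
    riccatiRHS p α t m₁ - riccatiRHS p α t m₂ =
      ((3 - p) / (p - 1) * (m₁ + m₂) - ((5 - p) / (p - 1) * α t + 1 / (p - 1))) * (m₁ - m₂) := by
  simp only [riccatiRHS]
  ring

theorem exists_ancient_riccatiRHS (hp1 : 1 < p) (hp3 : p < 3) (hα : Continuous α)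
    (hα_lim : Tendsto α atBot (𝓝 (1 / (3 - p))))
    (hα_rate : (fun t => α t - 1 / (3 - p)) =O[atBot] fun t => exp (t / 2)) :
    ∃ T : ℝ, ∃ μ : ℝ → ℝ, (∀ t < T, HasDerivAt μ (riccatiRHS p α t (μ t)) t) ∧
      Tendsto μ atBot (𝓝 (1 / (3 - p))) ∧
      (fun t => μ t - 1 / (3 - p)) =O[atBot] fun t => exp (t / 2) := by
  have hp : 0 < (p - 1) * (3 - p) := mul_pos (by linarith) (by linarith)
  have hp1' : p - 1 ≠ 0 := by linarith
  have hp3' : 3 - p ≠ 0 := by linarith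
  have hb : Tendsto (fun t => 1 / (p - 1) - (5 - p) / (p - 1) * α t) atBot
      (𝓝 (-(2 / ((p - 1) * (3 - p))))) := by
    convert tendsto_const_nhds.sub (hα_lim.const_mul ((5 - p) / (p - 1))) using 2
    field_simp
    ring
  have hbκ := hb.eventually (eventually_le_nhds (neg_lt_neg (half_lt_self (div_pos two_pos hp))))
  have ha : (fun t => (5 - p) / (p - 1) * (α t - 1 / (3 - p)) * α t) =O[atBot]
      fun t => exp (1 / 2 * t) := by
    refine ((hα_rate.mul (hα_lim.isBigO_one ℝ)).const_mul_left ((5 - p) / (p - 1))).congr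
      (fun t => by ring) fun t => ?_
    rw [mul_one, div_eq_inv_mul, one_div]
  obtain ⟨T, ν, hν, hνO⟩ := exists_riccati_solution_isBigO (c := (3 - p) / (p - 1))
    (half_pos (div_pos two_pos hp)) one_half_pos (by fun_prop) (by fun_prop) hbκ ha
  have hνO' : ν =O[atBot] fun t => exp (t / 2) := by simpa [div_eq_inv_mul] using hνO
  refine ⟨T, fun t => 1 / (3 - p) + ν t, fun t ht => ?_, ?_, by simpa using hνO'⟩
  · rw [riccatiRHS_add hp3.ne]
    exact (hν t ht).const_add _
  · simpa using (hνO'.trans_tendsto (tendsto_exp_atBot.comp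
      (tendsto_id.atBot_div_const two_pos))).const_add (1 / (3 - p))

theorem ancient_riccatiRHS_unique (hp1 : 1 < p) (hp3 : p < 3) (hα : Continuous α)
    (hα_lim : Tendsto α atBot (𝓝 (1 / (3 - p)))) {T₁ T₂ : ℝ} {μ₁ μ₂ : ℝ → ℝ}
    (hμ₁ : ∀ t < T₁, HasDerivAt μ₁ (riccatiRHS p α t (μ₁ t)) t)
    (hμ₁_lim : Tendsto μ₁ atBot (𝓝 (1 / (3 - p))))
    (hμ₂ : ∀ t < T₂, HasDerivAt μ₂ (riccatiRHS p α t (μ₂ t)) t)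
    (hμ₂_lim : Tendsto μ₂ atBot (𝓝 (1 / (3 - p)))) {t : ℝ} (ht : t < min T₁ T₂) :
    μ₁ t = μ₂ t := by
  set g : ℝ → ℝ := fun s =>
    (3 - p) / (p - 1) * (μ₁ s + μ₂ s) - ((5 - p) / (p - 1) * α s + 1 / (p - 1))
  have hg : ContinuousOn g (Iio (min T₁ T₂)) := fun s hs =>
    have hs' := lt_min_iff.1 hs
    (((hμ₁ s hs'.1).continuousAt.add (hμ₂ s hs'.2).continuousAt).const_mul _ |>.sub
      ((hα.continuousAt.const_mul _).add continuousAt_const)).continuousWithinAt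
  have hg_lim : Tendsto g atBot (𝓝 (-(2 / ((p - 1) * (3 - p))))) := by
    have hp1' : p - 1 ≠ 0 := by linarith
    have hp3' : 3 - p ≠ 0 := by linarith
    convert ((hμ₁_lim.add hμ₂_lim).const_mul ((3 - p) / (p - 1))).sub
      ((hα_lim.const_mul ((5 - p) / (p - 1))).add tendsto_const_nhds) using 2
    field_simp
    ring
  have hg0 := hg_lim.eventually (eventually_le_nhds (neg_neg_of_pos (div_pos two_pos
    (mul_pos (by linarith : (0 : ℝ) < p - 1) (by linarith : (0 : ℝ) < 3 - p)))))
  refine sub_eq_zero.1 (eq_zero_of_hasDerivAt_mul (w := fun s => μ₁ s - μ₂ s) (fun s hs => ?_)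
    hg hg0 (by simpa using hμ₁_lim.sub hμ₂_lim) ht)
  have hs' := lt_min_iff.1 hs
  exact ((hμ₁ s hs'.1).sub (hμ₂ s hs'.2)).congr_deriv (riccatiRHS_sub s _ _)

end Riccati

/-- Existence (on some interval `(-∞, T)`) and uniqueness of the ancient solution
`μ` of the Riccati equation with `μ(t) → 1/(3-p)` as `t → -∞`; moreover the
solution satisfies `μ(t) = 1/(3-p) + O(e^{t/2})` as `t → -∞`. -/
theorem stmt_19 (p : ℝ) (hp1 : 1 < p) (hp3 : p < 3) (α : ℝ → ℝ)
    (hα_cont : Continuous α)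
    (hα_lim : Tendsto α atBot (nhds (1 / (3 - p))))
    (hα_rate : (fun t => α t - 1 / (3 - p)) =O[atBot] fun t => Real.exp (t / 2)) :
    (∃ T : ℝ, ∃ μ : ℝ → ℝ,
      (∀ t < T, HasDerivAt μ (riccatiRHS p α t (μ t)) t) ∧
      Tendsto μ atBot (nhds (1 / (3 - p))) ∧
      (fun t => μ t - 1 / (3 - p)) =O[atBot] fun t => Real.exp (t / 2)) ∧
    (∀ T₁ T₂ : ℝ, ∀ μ₁ μ₂ : ℝ → ℝ,
      (∀ t < T₁, HasDerivAt μ₁ (riccatiRHS p α t (μ₁ t)) t) →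
      Tendsto μ₁ atBot (nhds (1 / (3 - p))) →
      (∀ t < T₂, HasDerivAt μ₂ (riccatiRHS p α t (μ₂ t)) t) →
      Tendsto μ₂ atBot (nhds (1 / (3 - p))) →
      ∀ t < min T₁ T₂, μ₁ t = μ₂ t) :=
  ⟨exists_ancient_riccatiRHS hp1 hp3 hα_cont hα_lim hα_rate,
    fun _ _ _ _ hμ₁ hμ₁_lim hμ₂ hμ₂_lim _ ht =>
      ancient_riccatiRHS_unique hp1 hp3 hα_cont hα_lim hμ₁ hμ₁_lim hμ₂ hμ₂_lim ht⟩
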